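/- arXiv:math/0107198 — 2 statements merged into one kernel-verified Lean document; each statement's English description precedes it below -/
import Mathlib

section
/- Let r ≥ 3, let k_1, k_2 be integers with 3 ≤ k_1 < k_2, and let k_j ≥ 3 for j = 3, 4, …, r. Then R(k_1, k_2, k_3, …, k_r) > (k_1 + 1) · (R(k_2 − k_1 + 1, k_3, …, k_r) − 1). -/
/-- A coloring `χ` of the edges of the complete graph on `V` contains a
monochromatic `K_m` of color `c`: there are `m` vertices all of whose
pairwise edges receive color `c`. -/
def HasMonoClique {V C : Type*} (χ : V → V → C) (c : C) (m : ℕ) : Prop :=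
  ∃ s : Finset V, s.card = m ∧ ∀ u ∈ s, ∀ v ∈ s, u ≠ v → χ u v = c

/-- `N` satisfies the multicolor Ramsey property for clique sizes `k : Fin r → ℕ`:
every symmetric `r`-coloring of the edges of `K_N` contains, for some color `i`,
a monochromatic `K_{k i}` of color `i`. -/
def RamseyProp (r : ℕ) (k : Fin r → ℕ) (N : ℕ) : Prop :=
  ∀ χ : Fin N → Fin N → Fin r, (∀ u v, χ u v = χ v u) →
    ∃ i : Fin r, HasMonoClique χ i (k i)

/-- `N` is the multicolor Ramsey number `R(k 0, …, k (r-1))`: the least positive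
integer with the Ramsey property. -/
def IsRamseyNumber (r : ℕ) (k : Fin r → ℕ) (N : ℕ) : Prop :=
  0 < N ∧ RamseyProp r k N ∧ ∀ M, 0 < M → RamseyProp r k M → N ≤ M

/-!
Take an `(r-1)`-colouring `χ` of `K_{M-1}` with no monochromatic clique of the prescribed
sizes, and blow every vertex up into a block of `k₁ + 1` vertices, grouped into the pairs
`{0, 1}, {2, 3}, …`. Inside a block, pairs get colour 1 and all other edges colour 0; between
two blocks joined in `χ`-colour 0, pairs (of distinct indices) get colour 0 and all other edges
colour 1; `χ`-colour `j ≠ 0` becomes colour `j + 1`. A colour-0 clique with at least three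
vertices lies in one block and contains at most one vertex of each pair, so it has fewer than
`k₁` vertices. A colour-1 clique meets the blocks of a `χ`-colour-0 clique, at most `k₂ - k₁`
of them, in at most two vertices each, and the blocks where it takes two vertices use
distinct pairs, so it has fewer than `k₂` vertices.
-/

def IsMonoOn {V C : Type*} (χ : V → V → C) (c : C) (s : Finset V) : Prop :=
  ∀ ⦃u⦄, u ∈ s → ∀ ⦃v⦄, v ∈ s → u ≠ v → χ u v = c

lemma HasMonoClique.of_embedding {V V' C : Type*} {χ : V' → V' → C} {c : C} {m : ℕ}
    (f : V ↪ V') (h : HasMonoClique (fun a b => χ (f a) (f b)) c m) : HasMonoClique χ c m := by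
  obtain ⟨s, hs, hmono⟩ := h
  refine ⟨s.map f, by simp [hs], ?_⟩
  simp only [Finset.mem_map]
  rintro _ ⟨a, ha, rfl⟩ _ ⟨b, hb, rfl⟩ hab
  exact hmono a ha b hb (ne_of_apply_ne f hab)

lemma IsMonoOn.hasMonoClique {V C : Type*} {χ : V → V → C} {c : C} {m : ℕ} {s : Finset V}
    (hs : IsMonoOn χ c s) (hm : m ≤ s.card) : HasMonoClique χ c m := by
  obtain ⟨s', hs's, hs'⟩ := Finset.exists_subset_card_eq hm
  exact ⟨s', hs', fun u hu v hv => hs (hs's hu) (hs's hv)⟩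

lemma RamseyProp.exists_hasMonoClique {r N : ℕ} {k : Fin r → ℕ} {V : Type*} [Fintype V]
    (h : RamseyProp r k N) (hN : N ≤ Fintype.card V) (χ : V → V → Fin r)
    (hχ : ∀ u v, χ u v = χ v u) : ∃ i, HasMonoClique χ i (k i) := by
  let f : Fin N ↪ V := (Fin.castLEEmb hN).trans (Fintype.equivFin V).symm.toEmbedding
  obtain ⟨i, hi⟩ := h (fun a b => χ (f a) (f b)) (fun a b => hχ _ _)
  exact ⟨i, hi.of_embedding f⟩

def Paired (p q : ℕ) : Prop := p / 2 = q / 2 ∧ p ≠ q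

instance : DecidableRel Paired := fun _ _ => inferInstanceAs (Decidable (_ ∧ _))

lemma Paired.symm {p q : ℕ} (h : Paired p q) : Paired q p := ⟨h.1.symm, h.2.symm⟩

lemma Paired.unique {p q q' : ℕ} (h : Paired p q) (h' : Paired p q') : q = q' := by
  unfold Paired at h h'
  omega

lemma card_le_of_injOn_div_two {α : Type*} {n : ℕ} {s : Finset α} (f : α → Fin (n + 1))
    (hf : Set.InjOn (fun a => (f a : ℕ) / 2) s) : s.card ≤ n / 2 + 1 := by
  simpa using Finset.card_le_card_of_injOn (t := Finset.range (n / 2 + 1)) _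
    (fun a _ => Finset.mem_range.mpr (Nat.lt_succ_of_le (Nat.div_le_div_right (f a).is_le))) hf

section Blowup

variable {W : Type*} [DecidableEq W] {s n : ℕ} (χ : W → W → Fin (s + 1))

def blowup (u v : Fin n × W) : Fin (s + 2) :=
  if u.2 = v.2 then (if Paired u.1 v.1 then 1 else 0)
  else if χ u.2 v.2 = 0 then (if Paired u.1 v.1 then 0 else 1)
  else (χ u.2 v.2).succ

variable {χ}

lemma blowup_symm (hχ : ∀ x y, χ x y = χ y x) (u v : Fin n × W) :
    blowup χ u v = blowup χ v u := by
  have hpair : Paired u.1 v.1 ↔ Paired v.1 u.1 := ⟨Paired.symm, Paired.symm⟩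
  simp only [blowup, eq_comm (a := u.2), hχ u.2 v.2, hpair]

section Entries

variable {u v : Fin n × W}

lemma paired_of_blowup_eq_zero (h : blowup χ u v = 0) (huv : u.2 ≠ v.2) :
    Paired u.1 v.1 := by
  unfold blowup at h
  split_ifs at h <;> simp_all

lemma not_paired_of_blowup_eq_zero (h : blowup χ u v = 0) (huv : u.2 = v.2) :
    ¬Paired u.1 v.1 := by
  unfold blowup at h
  split_ifs at h <;> simp_all

lemma paired_of_blowup_eq_one (h : blowup χ u v = 1) (huv : u.2 = v.2) :
    Paired u.1 v.1 := by
  unfold blowup at h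
  split_ifs at h <;> simp_all

lemma blowup_eq_one_of_ne (h : blowup χ u v = 1) (huv : u.2 ≠ v.2) :
    χ u.2 v.2 = 0 ∧ ¬Paired u.1 v.1 := by
  simp only [blowup, huv, if_false] at h
  split_ifs at h with h0 hp
  · exact absurd h zero_ne_one
  · exact ⟨h0, hp⟩
  · exact absurd (Fin.succ_injective _ (h.trans Fin.succ_zero_eq_one.symm)) h0

lemma blowup_eq_succ {j : Fin (s + 1)} (h : blowup χ u v = j.succ) (hj : j ≠ 0) :
    u.2 ≠ v.2 ∧ χ u.2 v.2 = j := by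
  have hj1 : j.succ ≠ 1 := fun h1 =>
    hj (Fin.succ_injective _ (h1.trans Fin.succ_zero_eq_one.symm))
  unfold blowup at h
  split_ifs at h with hsnd hp h0 hp
  · exact absurd h.symm hj1
  · exact absurd h.symm (Fin.succ_ne_zero j)
  · exact absurd h.symm (Fin.succ_ne_zero j)
  · exact absurd h.symm hj1
  · exact ⟨hsnd, Fin.succ_injective _ h⟩

end Entries

variable {t : Finset (Fin (n + 1) × W)}

lemma snd_eq_of_isMonoOn_blowup_zero (ht : IsMonoOn (blowup χ) 0 t)
    (h3 : 3 ≤ t.card) {u v : Fin (n + 1) × W} (hu : u ∈ t) (hv : v ∈ t) : u.2 = v.2 := by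
  by_contra huv
  obtain ⟨w, hw, hwv⟩ := Finset.exists_mem_ne (s := t.erase u) (by simp [hu]; omega) v
  obtain ⟨hwu, hw⟩ := Finset.mem_erase.mp hw
  have paired {a b} (ha : a ∈ t) (hb : b ∈ t) (hab : a.2 ≠ b.2) : Paired a.1 b.1 :=
    paired_of_blowup_eq_zero (ht ha hb (ne_of_apply_ne Prod.snd hab)) hab
  have huv' := paired hu hv huv
  by_cases hwu' : w.2 = u.2
  · have hwv' : w.2 ≠ v.2 := hwu' ▸ huv
    have := huv'.symm.unique (paired hw hv hwv').symm
    exact hwu (Prod.ext (Fin.ext this.symm) hwu')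
  by_cases hwv' : w.2 = v.2
  · have := huv'.unique (paired hu hw (Ne.symm hwu'))
    exact hwv (Prod.ext (Fin.ext this.symm) hwv')
  · exact (paired hv hw (Ne.symm hwv')).2 (huv'.unique (paired hu hw (Ne.symm hwu')))

lemma card_lt_of_isMonoOn_blowup_zero (hn : 3 ≤ n)
    (ht : IsMonoOn (blowup χ) 0 t) : t.card < n := by
  by_contra! hcard
  have hsnd {u v} (hu : u ∈ t) (hv : v ∈ t) : u.2 = v.2 :=
    snd_eq_of_isMonoOn_blowup_zero ht (by omega) hu hv
  have : t.card ≤ n / 2 + 1 := by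
    refine card_le_of_injOn_div_two Prod.fst fun u hu v hv hdiv => ?_
    by_contra huv
    refine not_paired_of_blowup_eq_zero (ht hu hv huv) (hsnd hu hv) ⟨hdiv, fun h => huv ?_⟩
    exact Prod.ext (Fin.ext h) (hsnd hu hv)
  omega

lemma isMonoOn_image_snd_of_isMonoOn_blowup_one
    (ht : IsMonoOn (blowup χ) 1 t) :
    IsMonoOn χ 0 (t.image Prod.snd) := by
  intro x hx y hy hxy
  obtain ⟨u, hu, rfl⟩ := Finset.mem_image.mp hx
  obtain ⟨v, hv, rfl⟩ := Finset.mem_image.mp hy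
  exact (blowup_eq_one_of_ne (ht hu hv (ne_of_apply_ne Prod.snd hxy)) hxy).1

lemma card_le_of_isMonoOn_blowup_one
    (ht : IsMonoOn (blowup χ) 1 t) :
    t.card ≤ (t.image Prod.snd).card + (n / 2 + 1) := by
  classical
  -- A block meets `t` in at most one vertex or in a pair; in the latter case mark its odd member.
  let Doubled (u : Fin (n + 1) × W) : Prop :=
    (u.1 : ℕ) % 2 = 1 ∧ ∃ w ∈ t, w.2 = u.2 ∧ w ≠ u
  have hsame {u v} (hu : u ∈ t) (hv : v ∈ t) (hne : u ≠ v) (h : u.2 = v.2) :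
      Paired u.1 v.1 :=
    paired_of_blowup_eq_one (ht hu hv hne) h
  have hsingle : (t.filter (¬Doubled ·)).card ≤ (t.image Prod.snd).card := by
    rw [← Finset.card_image_of_injOn (f := Prod.snd)]
    · exact Finset.card_le_card (Finset.image_subset_image (Finset.filter_subset _ _))
    intro u hu v hv huv
    simp only [Finset.mem_coe, Finset.mem_filter] at hu hv
    by_contra hne
    have hp := hsame hu.1 hv.1 hne huv
    rcases Nat.mod_two_eq_zero_or_one (u.1 : ℕ) with hu2 | hu2
    · exact hv.2 ⟨by unfold Paired at hp; omega, u, hu.1, huv, hne⟩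
    · exact hu.2 ⟨hu2, v, hv.1, huv.symm, Ne.symm hne⟩
  have hdoubled : (t.filter Doubled).card ≤ n / 2 + 1 := by
    refine card_le_of_injOn_div_two Prod.fst fun u hu v hv hdiv => ?_
    simp only [Finset.mem_coe, Finset.mem_filter] at hu hv
    obtain ⟨hut, hu2, w, hw, hwu, hwne⟩ := hu
    have h1 : (u.1 : ℕ) = v.1 := by simp only at hdiv; omega
    by_contra hne
    have hsnd : u.2 ≠ v.2 := fun h => hne (Prod.ext (Fin.ext h1) h)
    have hpw := hsame hw hut hwne hwu
    refine (blowup_eq_one_of_ne (ht hw hv.1 ?_) (hwu ▸ hsnd)).2 ?_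
    · rintro rfl; exact hsnd hwu.symm
    · unfold Paired at hpw ⊢; omega
  have hsplit := Finset.card_filter_add_card_filter_not (s := t) Doubled
  omega

lemma isMonoOn_image_snd_of_isMonoOn_blowup_succ {j : Fin (s + 1)} (hj : j ≠ 0)
    (ht : IsMonoOn (blowup χ) (j.succ) t) :
    IsMonoOn χ j (t.image Prod.snd) := by
  intro x hx y hy hxy
  obtain ⟨u, hu, rfl⟩ := Finset.mem_image.mp hx
  obtain ⟨v, hv, rfl⟩ := Finset.mem_image.mp hy
  exact (blowup_eq_succ (ht hu hv (ne_of_apply_ne Prod.snd hxy)) hj).2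

lemma card_image_snd_of_isMonoOn_blowup_succ {j : Fin (s + 1)} (hj : j ≠ 0)
    (ht : IsMonoOn (blowup χ) (j.succ) t) :
    (t.image Prod.snd).card = t.card :=
  Finset.card_image_of_injOn fun u hu v hv huv => by
    by_contra hne
    exact (blowup_eq_succ (ht hu hv hne) hj).1 huv

end Blowup

theorem mul_lt_of_ramseyProp {s m N : ℕ} (k : Fin (s + 2) → ℕ) (hk0 : 3 ≤ k 0)
    (hk01 : k 0 < k 1) (χ : Fin m → Fin m → Fin (s + 1)) (hχ : ∀ x y, χ x y = χ y x)
    (hχ0 : ¬HasMonoClique χ 0 (k 1 - k 0 + 1))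
    (hχj : ∀ j : Fin (s + 1), j ≠ 0 → ¬HasMonoClique χ j (k j.succ))
    (hN : RamseyProp (s + 2) k N) : (k 0 + 1) * m < N := by
  by_contra! hle
  obtain ⟨i, t, hcard, ht⟩ := hN.exists_hasMonoClique (V := Fin (k 0 + 1) × Fin m)
    (by simpa using hle) (blowup χ) (blowup_symm hχ)
  rcases Fin.eq_zero_or_eq_succ i with rfl | ⟨j, rfl⟩
  · exact (card_lt_of_isMonoOn_blowup_zero hk0 ht).ne hcard
  rcases eq_or_ne j 0 with rfl | hj
  · rw [Fin.succ_zero_eq_one] at hcard ht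
    have hB : (t.image Prod.snd).card ≤ k 1 - k 0 := by
      by_contra! hB
      exact hχ0 ((isMonoOn_image_snd_of_isMonoOn_blowup_one ht).hasMonoClique hB)
    have := card_le_of_isMonoOn_blowup_one ht
    omega
  · exact hχj j hj ((isMonoOn_image_snd_of_isMonoOn_blowup_succ hj ht).hasMonoClique
      (card_image_snd_of_isMonoOn_blowup_succ hj ht ▸ hcard.ge))

/-- Theorem 2: for `r ≥ 3`, `3 ≤ k_1 < k_2`, and `k_j ≥ 3` for `j ≥ 3`,
`R(k_1, k_2, …, k_r) > (k_1 + 1) * (R(k_2 - k_1 + 1, k_3, …, k_r) - 1)`. -/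
theorem ramsey_lower_bound_offdiag (r : ℕ) (hr : 3 ≤ r) (k : Fin r → ℕ)
    (hk1 : 3 ≤ k ⟨0, by omega⟩)
    (hk12 : k ⟨0, by omega⟩ < k ⟨1, by omega⟩)
    (N M : ℕ)
    (hN : IsRamseyNumber r k N)
    (hM : IsRamseyNumber (r - 1)
      (fun j => if j.1 = 0 then k ⟨1, by omega⟩ - k ⟨0, by omega⟩ + 1
                else k ⟨j.1 + 1, by have := j.2; omega⟩) M) :
    (k ⟨0, by omega⟩ + 1) * (M - 1) < N := by
  obtain ⟨s, rfl⟩ : ∃ s, r = s + 2 := ⟨r - 2, by omega⟩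
  rcases Nat.lt_or_ge M 2 with hM1 | hM2
  · rw [show M - 1 = 0 by omega, mul_zero]
    exact hN.1
  have hfail : ¬RamseyProp _ _ (M - 1) := fun h =>
    (hM.2.2 (M - 1) (by omega) h).not_gt (by omega)
  simp only [RamseyProp, not_forall, not_exists] at hfail
  obtain ⟨χ, hχ, hmono⟩ := hfail
  refine mul_lt_of_ramseyProp k hk1 hk12 χ hχ (by simpa using hmono (0 : Fin (s + 1)))
    (fun j hj => ?_) hN.2.1
  have hj' : (j : ℕ) ≠ 0 := Fin.val_ne_zero_iff.mpr hj
  have hχj := hmono j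
  simp only [hj', if_false] at hχj
  exact hχj
end

section
/- If the three-color Ramsey number satisfies R(9, 3, 3) ≥ 110, then the four-color Ramsey number satisfies R(3, 11, 3, 3) ≥ 437 (equivalently, R(3, 3, 3, 11) ≥ 437, since the Ramsey number is symmetric in its arguments). -/
namespace R3311

lemma ramsey_mono {r : ℕ} {k : Fin r → ℕ} {N P : ℕ} (h : RamseyProp r k N) (hNP : N ≤ P) :
    RamseyProp r k P := by
  intro χ hsym
  obtain ⟨i, s, hcard, hmono⟩ := h (fun u v => χ (Fin.castLE hNP u) (Fin.castLE hNP v))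
    (fun u v => hsym _ _)
  refine ⟨i, s.map (Fin.castLEEmb hNP), by simpa using hcard, ?_⟩
  simp only [Finset.mem_map]
  rintro u ⟨a, ha, rfl⟩ v ⟨b, hb, rfl⟩ hne
  exact hmono a ha b hb (fun h => hne (by rw [h]))

def grp (x : Fin 436) : Fin 4 := ⟨x.val / 109, by omega⟩

def prj (x : Fin 436) : Fin 109 := ⟨x.val % 109, by omega⟩

lemma eq_of {x y : Fin 436} (h1 : grp x = grp y) (h2 : prj x = prj y) : x = y := by
  have h1' := congrArg Fin.val h1
  have h2' := congrArg Fin.val h2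
  simp only [grp, prj] at h1' h2'
  exact Fin.ext (by omega)

def Phi (χ : Fin 109 → Fin 109 → Fin 3) (x y : Fin 436) : Fin 4 :=
  if grp x = grp y then (χ (prj x) (prj y)).succ
  else if prj x = prj y then (if ((grp x).val + (grp y).val) % 2 = 0 then 1 else 0)
  else if ((grp x).val + (grp y).val) % 2 = 0 ∧ χ (prj x) (prj y) = 0 then 0
  else (χ (prj x) (prj y)).succ

variable {χ : Fin 109 → Fin 109 → Fin 3}

lemma Phi_symm (hs : ∀ u v, χ u v = χ v u) (x y : Fin 436) : Phi χ x y = Phi χ y x := by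
  unfold Phi
  have hχ := hs (prj x) (prj y)
  by_cases h1 : grp x = grp y
  · rw [if_pos h1, if_pos (show grp y = grp x from h1.symm), hχ]
  · rw [if_neg h1, if_neg (show ¬ grp y = grp x from fun h => h1 h.symm)]
    by_cases h2 : prj x = prj y
    · rw [if_pos h2, if_pos (show prj y = prj x from h2.symm), Nat.add_comm]
    · rw [if_neg h2, if_neg (show ¬ prj y = prj x from fun h => h2 h.symm), hχ,
        Nat.add_comm ((grp x).val)]

lemma Phi_spec (χ : Fin 109 → Fin 109 → Fin 3) (x y : Fin 436) :
    (grp x = grp y ∧ Phi χ x y = (χ (prj x) (prj y)).succ)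
  ∨ (grp x ≠ grp y ∧ prj x = prj y ∧ ((grp x).val + (grp y).val) % 2 = 0 ∧ Phi χ x y = 1)
  ∨ (grp x ≠ grp y ∧ prj x = prj y ∧ ((grp x).val + (grp y).val) % 2 = 1 ∧ Phi χ x y = 0)
  ∨ (grp x ≠ grp y ∧ prj x ≠ prj y ∧ ((grp x).val + (grp y).val) % 2 = 0 ∧
      χ (prj x) (prj y) = 0 ∧ Phi χ x y = 0)
  ∨ (grp x ≠ grp y ∧ prj x ≠ prj y ∧
      ¬(((grp x).val + (grp y).val) % 2 = 0 ∧ χ (prj x) (prj y) = 0) ∧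
      Phi χ x y = (χ (prj x) (prj y)).succ) := by
  by_cases h1 : grp x = grp y
  · exact Or.inl ⟨h1, by unfold Phi; rw [if_pos h1]⟩
  · by_cases h2 : prj x = prj y
    · by_cases h3 : ((grp x).val + (grp y).val) % 2 = 0
      · exact Or.inr (Or.inl ⟨h1, h2, h3, by unfold Phi; rw [if_neg h1, if_pos h2, if_pos h3]⟩)
      · exact Or.inr (Or.inr (Or.inl ⟨h1, h2, by omega,
          by unfold Phi; rw [if_neg h1, if_pos h2, if_neg h3]⟩))
    · by_cases h4 : ((grp x).val + (grp y).val) % 2 = 0 ∧ χ (prj x) (prj y) = 0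
      · exact Or.inr (Or.inr (Or.inr (Or.inl ⟨h1, h2, h4.1, h4.2,
          by unfold Phi; rw [if_neg h1, if_neg h2, if_pos h4]⟩)))
      · exact Or.inr (Or.inr (Or.inr (Or.inr ⟨h1, h2, h4,
          by unfold Phi; rw [if_neg h1, if_neg h2, if_neg h4]⟩)))

lemma succ_ne_zero' (c : Fin 3) : c.succ ≠ (0 : Fin 4) := by
  revert c; decide

lemma succ_inj' {a b : Fin 3} (h : a.succ = b.succ) : a = b := by
  revert h; revert a b; decide

lemma succ_eq_one' {c : Fin 3} (h : c.succ = (1 : Fin 4)) : c = 0 := by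
  revert h; revert c; decide

lemma one_ne_succ {c : Fin 3} (hc : c ≠ 0) : (1 : Fin 4) ≠ c.succ := by
  revert hc; revert c; decide

lemma zero_ne_succ (c : Fin 3) : (0 : Fin 4) ≠ c.succ := fun h => succ_ne_zero' c h.symm

lemma tri_case (χ : Fin 109 → Fin 109 → Fin 3) (c : Fin 3) (hc : c ≠ 0) (s : Finset (Fin 436))
    (hcard : s.card = 3) (hclq : ∀ x ∈ s, ∀ y ∈ s, x ≠ y → Phi χ x y = c.succ) :
    HasMonoClique χ c 3 := by
  obtain ⟨a, b, d, hab, had, hbd, rfl⟩ := Finset.card_eq_three.1 hcard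
  have hk : ∀ x ∈ ({a, b, d} : Finset (Fin 436)), ∀ y ∈ ({a, b, d} : Finset (Fin 436)), x ≠ y →
      prj x ≠ prj y ∧ χ (prj x) (prj y) = c := by
    intro x hx y hy hxy
    have h := hclq x hx y hy hxy
    rcases Phi_spec χ x y with ⟨g1, hv⟩ | ⟨g1, g2, g3, hv⟩ | ⟨g1, g2, g3, hv⟩ |
      ⟨g1, g2, g3, g4, hv⟩ | ⟨g1, g2, g3, hv⟩
    · exact ⟨fun hp => hxy (eq_of g1 hp), succ_inj' (hv.symm.trans h)⟩
    · exact absurd (hv.symm.trans h) (one_ne_succ hc)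
    · exact absurd (hv.symm.trans h) (zero_ne_succ c)
    · exact absurd (hv.symm.trans h) (zero_ne_succ c)
    · exact ⟨g2, succ_inj' (hv.symm.trans h)⟩
  have p1 := hk a (by simp) b (by simp) hab
  have p2 := hk a (by simp) d (by simp) had
  have p3 := hk b (by simp) d (by simp) hbd
  have q1 := hk b (by simp) a (by simp) (Ne.symm hab)
  have q2 := hk d (by simp) a (by simp) (Ne.symm had)
  have q3 := hk d (by simp) b (by simp) (Ne.symm hbd)
  refine ⟨{prj a, prj b, prj d},
    Finset.card_eq_three.2 ⟨prj a, prj b, prj d, p1.1, p2.1, p3.1, rfl⟩, ?_⟩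
  intro u hu v hv huv
  simp only [Finset.mem_insert, Finset.mem_singleton] at hu hv
  rcases hu with rfl | rfl | rfl <;> rcases hv with rfl | rfl | rfl
  · exact absurd rfl huv
  · exact p1.2
  · exact p2.2
  · exact q1.2
  · exact absurd rfl huv
  · exact p3.2
  · exact q2.2
  · exact q3.2
  · exact absurd rfl huv

lemma key (hs : ∀ u v, χ u v = χ v u)
    (h9 : ¬ HasMonoClique χ 0 9) (h13 : ¬ HasMonoClique χ 1 3)
    (h23 : ¬ HasMonoClique χ 2 3) : ¬ RamseyProp 4 ![3, 11, 3, 3] 436 := by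
  intro hR
  obtain ⟨i, s, hcard, hclq⟩ := hR (Phi χ) (Phi_symm hs)
  -- characterize colors
  fin_cases i
  -- color 0 : triangle in T
  · have hcard3 : s.card = 3 := by simpa using hcard
    obtain ⟨a, b, c, hab, hac, hbc, rfl⟩ := Finset.card_eq_three.1 hcard3
    have hm : ∀ x y : Fin 436, x ∈ ({a, b, c} : Finset (Fin 436)) →
        y ∈ ({a, b, c} : Finset (Fin 436)) → x ≠ y →
        grp x ≠ grp y ∧
          ((prj x = prj y ∧ ((grp x).val + (grp y).val) % 2 = 1) ∨
           (prj x ≠ prj y ∧ ((grp x).val + (grp y).val) % 2 = 0)) := by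
      intro x y hx hy hxy
      have h := hclq x hx y hy hxy
      have h0 : Phi χ x y = 0 := by simpa using h
      rcases Phi_spec χ x y with ⟨g1, hv⟩ | ⟨g1, g2, g3, hv⟩ | ⟨g1, g2, g3, hv⟩ |
        ⟨g1, g2, g3, g4, hv⟩ | ⟨g1, g2, g3, hv⟩
      · exact absurd (hv.symm.trans h0) (succ_ne_zero' _)
      · exact absurd (hv.symm.trans h0) (by decide)
      · exact ⟨g1, Or.inl ⟨g2, g3⟩⟩
      · exact ⟨g1, Or.inr ⟨g2, g3⟩⟩
      · exact absurd (hv.symm.trans h0) (succ_ne_zero' _)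
    have e1 := hm a b (by simp) (by simp) hab
    have e2 := hm a c (by simp) (by simp) hac
    have e3 := hm b c (by simp) (by simp) hbc
    obtain ⟨hg1, e1⟩ := e1
    obtain ⟨hg2, e2⟩ := e2
    obtain ⟨hg3, e3⟩ := e3
    have hg1' : (grp a).val ≠ (grp b).val := fun h => hg1 (Fin.val_injective h)
    have hg2' : (grp a).val ≠ (grp c).val := fun h => hg2 (Fin.val_injective h)
    have hg3' : (grp b).val ≠ (grp c).val := fun h => hg3 (Fin.val_injective h)
    have l1 := (grp a).isLt
    have l2 := (grp b).isLt
    have l3 := (grp c).isLt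
    rcases e1 with ⟨p1, q1⟩ | ⟨p1, q1⟩ <;>
      rcases e2 with ⟨p2, q2⟩ | ⟨p2, q2⟩ <;>
        rcases e3 with ⟨p3, q3⟩ | ⟨p3, q3⟩
    · omega
    · exact p3 (p1.symm.trans p2)
    · exact p2 (p1.trans p3)
    · omega
    · exact p1 (p2.trans p3.symm)
    · omega
    · omega
    · omega
  -- color 1 : K_11 in A
  · have hcard11 : s.card = 11 := by simpa using hcard
    have hclq1 : ∀ x ∈ s, ∀ y ∈ s, x ≠ y → Phi χ x y = 1 := by
      intro x hx y hy hxy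
      simpa using hclq x hx y hy hxy
    -- claim 1 : distinct projections give χ = 0
    have claim1 : ∀ x ∈ s, ∀ y ∈ s, prj x ≠ prj y → χ (prj x) (prj y) = 0 := by
      intro x hx y hy hp
      have hxy : x ≠ y := fun h => hp (by rw [h])
      have h := hclq1 x hx y hy hxy
      have h' : Phi χ x y = 1 := by simpa using h
      rcases Phi_spec χ x y with ⟨g1, hv⟩ | ⟨g1, g2, g3, hv⟩ | ⟨g1, g2, g3, hv⟩ |
        ⟨g1, g2, g3, g4, hv⟩ | ⟨g1, g2, g3, hv⟩
      · exact succ_eq_one' (hv.symm.trans h')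
      · exact absurd g2 hp
      · exact absurd g2 hp
      · exact absurd (hv.symm.trans h') (by decide)
      · exact succ_eq_one' (hv.symm.trans h')

    -- pairEq : equal projections give diagonal groups
    have pairEq : ∀ x ∈ s, ∀ y ∈ s, x ≠ y → prj x = prj y →
        grp x ≠ grp y ∧ ((grp x).val + (grp y).val) % 2 = 0 := by
      intro x hx y hy hxy hp
      have hg : grp x ≠ grp y := fun hg => hxy (eq_of hg hp)
      have h := hclq1 x hx y hy hxy
      rcases Phi_spec χ x y with ⟨g1, hv⟩ | ⟨g1, g2, g3, hv⟩ | ⟨g1, g2, g3, hv⟩ |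
        ⟨g1, g2, g3, g4, hv⟩ | ⟨g1, g2, g3, hv⟩
      · exact absurd g1 hg
      · exact ⟨hg, g3⟩
      · exact absurd (hv.symm.trans h) (by decide)
      · exact absurd hp g2
      · exact absurd hp g2
    -- hdiag : distinct projections across a diagonal pair of groups : impossible
    have hdiag : ∀ x ∈ s, ∀ y ∈ s, prj x ≠ prj y → grp x ≠ grp y →
        ((grp x).val + (grp y).val) % 2 = 0 → False := by
      intro x hx y hy hp hg hpar
      have hxy : x ≠ y := fun h => hp (by rw [h])
      have hχ0 := claim1 x hx y hy hp
      have h := hclq1 x hx y hy hxy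
      rcases Phi_spec χ x y with ⟨g1, hv⟩ | ⟨g1, g2, g3, hv⟩ | ⟨g1, g2, g3, hv⟩ |
        ⟨g1, g2, g3, g4, hv⟩ | ⟨g1, g2, g3, hv⟩
      · exact hg g1
      · exact hp g2
      · exact hp g2
      · exact absurd (hv.symm.trans h) (by decide)
      · exact g3 ⟨hpar, hχ0⟩
    set P : Finset (Fin 109) := s.image prj with hP
    have hPclq : ∀ u ∈ P, ∀ v ∈ P, u ≠ v → χ u v = 0 := by
      intro u hu v hv huv
      obtain ⟨x, hx, rfl⟩ := Finset.mem_image.1 hu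
      obtain ⟨y, hy, rfl⟩ := Finset.mem_image.1 hv
      exact claim1 x hx y hy huv
    have hP8 : P.card ≤ 8 := by
      by_contra hc
      push_neg at hc
      obtain ⟨Q, hQP, hQ9⟩ := Finset.exists_subset_card_eq (by omega : 9 ≤ P.card)
      exact h9 ⟨Q, hQ9, fun u hu v hv huv => hPclq u (hQP hu) v (hQP hv) huv⟩
    have hfib2 : ∀ u : Fin 109, (s.filter fun x => prj x = u).card ≤ 2 := by
      intro u
      by_contra hc
      push_neg at hc
      obtain ⟨t, ht, h3⟩ := Finset.exists_subset_card_eq (by omega : 3 ≤ (s.filter fun x => prj x = u).card)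
      obtain ⟨x, y, z, hxy, hxz, hyz, rfl⟩ := Finset.card_eq_three.1 h3
      have hx := ht (by simp : x ∈ ({x, y, z} : Finset (Fin 436)))
      have hy := ht (by simp : y ∈ ({x, y, z} : Finset (Fin 436)))
      have hz := ht (by simp : z ∈ ({x, y, z} : Finset (Fin 436)))
      rw [Finset.mem_filter] at hx hy hz
      have e1 := pairEq x hx.1 y hy.1 hxy (hx.2.trans hy.2.symm)
      have e2 := pairEq x hx.1 z hz.1 hxz (hx.2.trans hz.2.symm)
      have e3 := pairEq y hy.1 z hz.1 hyz (hy.2.trans hz.2.symm)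
      have g1 : (grp x).val ≠ (grp y).val := fun h => e1.1 (Fin.val_injective h)
      have g2 : (grp x).val ≠ (grp z).val := fun h => e2.1 (Fin.val_injective h)
      have g3 : (grp y).val ≠ (grp z).val := fun h => e3.1 (Fin.val_injective h)
      have l1 := (grp x).isLt
      have l2 := (grp y).isLt
      have l3 := (grp z).isLt
      have q1 := e1.2
      have q2 := e2.2
      have q3 := e3.2
      omega
    -- step : two distinct doubled projections with same parity class : impossible
    have step : ∀ x1 ∈ s, ∀ x2 ∈ s, ∀ y1 ∈ s, ∀ y2 ∈ s,
        x1 ≠ x2 → y1 ≠ y2 → prj x1 = prj x2 → prj y1 = prj y2 → prj x1 ≠ prj y1 →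
        (grp x1).val % 2 = (grp y1).val % 2 → False := by
      intro x1 hx1 x2 hx2 y1 hy1 y2 hy2 hx12 hy12 hpx hpy hpxy hpar
      obtain ⟨hgx, hqx⟩ := pairEq x1 hx1 x2 hx2 hx12 hpx
      obtain ⟨hgy, hqy⟩ := pairEq y1 hy1 y2 hy2 hy12 hpy
      by_cases hc : grp x1 = grp y1
      · have hgy2 : grp x1 ≠ grp y2 := fun h => hgy (hc ▸ h)
        have hpxy2 : prj x1 ≠ prj y2 := fun h => hpxy (h.trans hpy.symm)
        have hcv : (grp x1).val = (grp y1).val := congrArg Fin.val hc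
        exact hdiag x1 hx1 y2 hy2 hpxy2 hgy2 (by omega)
      · exact hdiag x1 hx1 y1 hy1 hpxy hc (by omega)
    classical
    set D : Finset (Fin 109) := P.filter (fun u => 2 ≤ (s.filter fun x => prj x = u).card) with hD
    have hD2 : D.card ≤ 2 := by
      by_contra hc
      push_neg at hc
      obtain ⟨t, ht, h3⟩ := Finset.exists_subset_card_eq (by omega : 3 ≤ D.card)
      obtain ⟨u, v, w, huv, huw, hvw, rfl⟩ := Finset.card_eq_three.1 h3
      have hu := ht (by simp : u ∈ ({u, v, w} : Finset (Fin 109)))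
      have hv := ht (by simp : v ∈ ({u, v, w} : Finset (Fin 109)))
      have hw := ht (by simp : w ∈ ({u, v, w} : Finset (Fin 109)))
      rw [hD, Finset.mem_filter] at hu hv hw
      obtain ⟨a1, ha1, a2, ha2, ha12⟩ := Finset.one_lt_card.1 (by omega : 1 < (s.filter fun x => prj x = u).card)
      obtain ⟨b1, hb1, b2, hb2, hb12⟩ := Finset.one_lt_card.1 (by omega : 1 < (s.filter fun x => prj x = v).card)
      obtain ⟨c1, hc1, c2, hc2, hc12⟩ := Finset.one_lt_card.1 (by omega : 1 < (s.filter fun x => prj x = w).card)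
      rw [Finset.mem_filter] at ha1 ha2 hb1 hb2 hc1 hc2
      have hpab : prj a1 ≠ prj b1 := by rw [ha1.2, hb1.2]; exact huv
      have hpac : prj a1 ≠ prj c1 := by rw [ha1.2, hc1.2]; exact huw
      have hpbc : prj b1 ≠ prj c1 := by rw [hb1.2, hc1.2]; exact hvw
      have hpa : prj a1 = prj a2 := ha1.2.trans ha2.2.symm
      have hpb : prj b1 = prj b2 := hb1.2.trans hb2.2.symm
      have hpc : prj c1 = prj c2 := hc1.2.trans hc2.2.symm
      have htri : (grp a1).val % 2 = (grp b1).val % 2 ∨ (grp a1).val % 2 = (grp c1).val % 2 ∨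
          (grp b1).val % 2 = (grp c1).val % 2 := by omega
      rcases htri with h | h | h
      · exact step a1 ha1.1 a2 ha2.1 b1 hb1.1 b2 hb2.1 ha12 hb12 hpa hpb hpab h
      · exact step a1 ha1.1 a2 ha2.1 c1 hc1.1 c2 hc2.1 ha12 hc12 hpa hpc hpac h
      · exact step b1 hb1.1 b2 hb2.1 c1 hc1.1 c2 hc2.1 hb12 hc12 hpb hpc hpbc h
    -- counting
    have hsum : s.card = ∑ u ∈ P, (s.filter fun x => prj x = u).card :=
      Finset.card_eq_sum_card_fiberwise (fun x hx => Finset.mem_image_of_mem prj hx)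
    have hsplit := Finset.sum_filter_add_sum_filter_not P
      (fun u => 2 ≤ (s.filter fun x => prj x = u).card) (fun u => (s.filter fun x => prj x = u).card)
    have hb1 : ∑ u ∈ D, (s.filter fun x => prj x = u).card ≤ D.card * 2 := by
      have := Finset.sum_le_card_nsmul D (fun u => (s.filter fun x => prj x = u).card) 2
        (fun u _ => hfib2 u)
      simpa using this
    have hb2 : ∑ u ∈ P.filter (fun u => ¬ 2 ≤ (s.filter fun x => prj x = u).card),
        (s.filter fun x => prj x = u).card ≤
        (P.filter (fun u => ¬ 2 ≤ (s.filter fun x => prj x = u).card)).card * 1 := by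
      refine Finset.sum_le_card_nsmul _ _ 1 ?_
      intro u hu
      rw [Finset.mem_filter] at hu
      omega
    have hcards := Finset.card_filter_add_card_filter_not
      (s := P) (p := fun u => 2 ≤ (s.filter fun x => prj x = u).card)
    rw [← hD] at hsplit hcards
    omega
  -- color 2 : triangle in c
  · refine absurd (tri_case χ 1 (by decide) s (by simpa using hcard) ?_) h13
    intro x hx y hy hxy
    have h := hclq x hx y hy hxy
    rw [show ((1 : Fin 3).succ) = (2 : Fin 4) from rfl]
    simpa using h
  -- color 3 : triangle in d
  · refine absurd (tri_case χ 2 (by decide) s (by simpa using hcard) ?_) h23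
    intro x hx y hy hxy
    have h := hclq x hx y hy hxy
    rw [show ((2 : Fin 3).succ) = (3 : Fin 4) from rfl]
    simpa using h

end R3311

/-- If `R(9,3,3) ≥ 110` then `R(3,11,3,3) ≥ 437`. -/
theorem ramsey_four_color_3_11_3_3 (M N : ℕ)
    (hM : IsRamseyNumber 3 ![9, 3, 3] M) (hM110 : 110 ≤ M)
    (hN : IsRamseyNumber 4 ![3, 11, 3, 3] N) :
    437 ≤ N := by
  have h109 : ¬ RamseyProp 3 ![9, 3, 3] 109 := by
    intro h
    have := hM.2.2 109 (by norm_num) h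
    omega
  rw [RamseyProp] at h109
  push_neg at h109
  obtain ⟨χ, hχsym, hχ⟩ := h109
  have h9 : ¬ HasMonoClique χ 0 9 := by simpa using hχ 0
  have h13 : ¬ HasMonoClique χ 1 3 := by simpa using hχ 1
  have h23 : ¬ HasMonoClique χ 2 3 := by simpa using hχ 2
  by_contra hlt
  push_neg at hlt
  exact R3311.key hχsym h9 h13 h23 (R3311.ramsey_mono hN.2.1 (by omega))
end
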